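/- In the q-shuffle algebra V, for all k, ℓ ∈ ℕ the concatenation identity W_{−k} ⋆ G_{ℓ+1} = x·(G_k ⋆ G_{ℓ+1}) + q⁻²·y·(W_{−k} ⋆ W_{−ℓ}) holds, where · denotes left multiplication by a letter in the free algebra and ⋆ is the q-shuffle product. -/
import Mathlib


noncomputable section

/-- Words in the letters `x` (= `false`) and `y` (= `true`). -/
abbrev Wd := List Bool

/-- The underlying vector space of the free algebra `F⟨x,y⟩`,
with the words as a basis. -/
abbrev V (F : Type*) [Field F] := Wd →₀ F

/-- The pairing `⟨u,v⟩` on letters: `2` if equal, `-2` if distinct. -/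
def pr (a b : Bool) : ℤ := if a = b then 2 else -2

/-- `⟨u₁,b⟩ + ⟨u₂,b⟩ + ⋯ + ⟨u_r,b⟩` for a word `u` and a letter `b`. -/
def wsum (u : Wd) (b : Bool) : ℤ := (u.map fun a => pr a b).sum

variable {F : Type*} [Field F]

/-- Left multiplication by a letter, in the free (concatenation) algebra. -/
def lmul (a : Bool) (f : V F) : V F := Finsupp.mapDomain (fun w => a :: w) f

/-- The `q`-shuffle product of two words (as an element of `V F`), defined by
Rosso's recursion
`u ⋆ v = u₁((u₂⋯u_r) ⋆ v) + q^{⟨u₁,v₁⟩+⋯+⟨u_r,v₁⟩} v₁(u ⋆ (v₂⋯v_s))`. -/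
def sh (q : F) : Wd → Wd → V F
  | [], v => Finsupp.single v 1
  | u@(_ :: _), [] => Finsupp.single u 1
  | a :: u', b :: v' =>
      lmul a (sh q u' (b :: v')) +
        q ^ wsum (a :: u') b • lmul b (sh q (a :: u') v')
  termination_by u v => u.length + v.length
  decreasing_by all_goals (simp only [List.length_cons]; omega)

/-- The `q`-shuffle product on `V F`, extended bilinearly from words. -/
def st (q : F) (f g : V F) : V F :=
  f.sum fun u cu => g.sum fun v cv => (cu * cv) • sh q u v

/-- The concatenation (free-algebra) product on `V F`. -/
def cm (f g : V F) : V F :=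
  f.sum fun u cu => g.sum fun v cv => Finsupp.single (u ++ v) (cu * cv)

/-- Powers with respect to the concatenation product. -/
def cpow (f : V F) : ℕ → V F
  | 0 => Finsupp.single [] 1
  | n + 1 => cm f (cpow f n)

/-- The alternating word `W_{-k} = xyx⋯x` of length `2k+1`. -/
def altX : ℕ → Wd
  | 0 => [false]
  | k + 1 => false :: true :: altX k

/-- The alternating word `W_{k+1} = yxy⋯y` of length `2k+1`. -/
def altY : ℕ → Wd
  | 0 => [true]
  | k + 1 => true :: false :: altY k

/-- The alternating word `G_k = (yx)^k`. -/
def gw : ℕ → Wd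
  | 0 => []
  | k + 1 => true :: false :: gw k

/-- The alternating word `G̃_k = (xy)^k`. -/
def gtw : ℕ → Wd
  | 0 => []
  | k + 1 => false :: true :: gtw k

/-- `W_{-k}` as an element of `V F`. -/
def Wm (F : Type*) [Field F] (k : ℕ) : V F := Finsupp.single (altX k) 1

/-- `W_{k+1}` as an element of `V F`. -/
def Wp (F : Type*) [Field F] (k : ℕ) : V F := Finsupp.single (altY k) 1

/-- `G_k` as an element of `V F`. -/
def Gn (F : Type*) [Field F] (k : ℕ) : V F := Finsupp.single (gw k) 1

/-- `G̃_k` as an element of `V F`. -/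
def Gt (F : Type*) [Field F] (k : ℕ) : V F := Finsupp.single (gtw k) 1

lemma st_single {F : Type*} [Field F] (q : F) (u v : Wd) :
    st q (Finsupp.single u (1:F)) (Finsupp.single v 1) = sh q u v := by
  unfold st
  rw [Finsupp.sum_single_index, Finsupp.sum_single_index] <;> simp

lemma altX_eq (k : ℕ) : altX k = false :: gw k := by
  induction k with
  | zero => rfl
  | succ k ih => simp [altX, gw, ih]

lemma wsum_altX (k : ℕ) : wsum (altX k) true = -2 := by
  induction k with
  | zero => simp [altX, wsum, pr]
  | succ k ih => simp [altX, wsum, pr] at *; omega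


/-- `W_{−k} ⋆ G_{ℓ+1} = x(G_k ⋆ G_{ℓ+1}) + q⁻² y(W_{−k} ⋆ W_{−ℓ})`. -/
theorem stmt_15 {F : Type*} [Field F] (q : F) (hq : q ≠ 0)
    (hq' : ∀ n : ℕ, 0 < n → q ^ n ≠ 1) (k l : ℕ) :
    st q (Wm F k) (Gn F (l + 1))
      = lmul false (st q (Gn F k) (Gn F (l + 1)))
        + ((q⁻¹) ^ 2) • lmul true (st q (Wm F k) (Wm F l)) := by
  have h1 : gw (l+1) = true :: altX l := by rw [altX_eq]; rfl
  rw [Wm, Gn, Gn, Wm, st_single, st_single, st_single, altX_eq k, h1, sh,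
    ← altX_eq, ← h1, wsum_altX]
  congr 1
  congr 1
  rw [zpow_neg, inv_pow]
  norm_cast
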